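/- arXiv:1702.06909 — 3 statements merged into one kernel-verified Lean document; each statement's English description precedes it below -/
import Mathlib

section
/- Let A be a maximal {(sk−s+1)k, k}-arc in a projective plane P of order sk with k ≥ 2. Then the nonempty intersections of the lines of P with A are the blocks of a 2-((sk−s+1)k, k, 1) design on the points of A. -/
/-- The nonempty intersections of the lines of a projective plane of order
`s k` with a maximal {(sk−s+1)k, k}-arc `A` (`k ≥ 2`) are the blocks of a
2-((sk−s+1)k, k, 1) design on the points of `A`. -/
theorem arc_design {α : Type*} [DecidableEq α]
    (X : Finset α) (L : Finset (Finset α)) (s k : ℕ) (hk : 2 ≤ k)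
    (hX : X.card = (s * k) ^ 2 + s * k + 1)
    (hlines : ∀ l ∈ L, l ⊆ X ∧ l.card = s * k + 1)
    (hpair : ∀ x ∈ X, ∀ y ∈ X, x ≠ y →
      (L.filter (fun l => x ∈ l ∧ y ∈ l)).card = 1)
    (A : Finset α) (hAX : A ⊆ X)
    (hAcard : A.card = (s * k - s + 1) * k)
    (harc : ∀ l ∈ L, (l ∩ A).card = 0 ∨ (l ∩ A).card = k) :
    ∀ B : Finset (Finset α),
      B = (L.filter (fun l => (l ∩ A).Nonempty)).image (fun l => l ∩ A) →
      (∀ b ∈ B, b ⊆ A ∧ b.card = k) ∧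
        (∀ x ∈ A, ∀ y ∈ A, x ≠ y →
          (B.filter (fun b => x ∈ b ∧ y ∈ b)).card = 1) := by
  intro B hB
  subst hB
  constructor
  · intro b hb
    simp only [Finset.mem_image, Finset.mem_filter] at hb
    obtain ⟨l, ⟨hl, hne⟩, rfl⟩ := hb
    refine ⟨Finset.inter_subset_right, ?_⟩
    rcases harc l hl with h0 | hk'
    · exact absurd (Finset.card_eq_zero.mp h0) hne.ne_empty
    · exact hk'
  · intro x hx y hy hxy
    have h1 := hpair x (hAX hx) y (hAX hy) hxy
    obtain ⟨l0, hl0⟩ := Finset.card_eq_one.mp h1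
    have hl0mem : l0 ∈ L ∧ x ∈ l0 ∧ y ∈ l0 := by
      have := Finset.mem_filter.mp (hl0 ▸ Finset.mem_singleton_self l0)
      exact ⟨this.1, this.2⟩
    rw [Finset.card_eq_one]
    refine ⟨l0 ∩ A, ?_⟩
    ext b
    simp only [Finset.mem_filter, Finset.mem_image, Finset.mem_singleton]
    constructor
    · rintro ⟨⟨l, ⟨hl, hne⟩, rfl⟩, hxb, hyb⟩
      have hmem : l ∈ L.filter (fun l => x ∈ l ∧ y ∈ l) := by
        simp [hl, (Finset.mem_inter.mp hxb).1, (Finset.mem_inter.mp hyb).1]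
      rw [hl0, Finset.mem_singleton] at hmem
      subst hmem; rfl
    · rintro rfl
      exact ⟨⟨l0, ⟨hl0mem.1, ⟨x, Finset.mem_inter.mpr ⟨hl0mem.2.1, hx⟩⟩⟩, rfl⟩,
        Finset.mem_inter.mpr ⟨hl0mem.2.1, hx⟩, Finset.mem_inter.mpr ⟨hl0mem.2.2, hy⟩⟩
end

section
/- Let A be a maximal arc in a projective plane P of order sk meeting every line in 0 or k points. Then the set of lines disjoint from A, viewed as a set of points of the dual plane, is a maximal {(sk−k+1)s, s}-arc in the dual plane: every point of P not in A lies on exactly s such lines, and every point of A lies on none. -/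
/-!
Through a point `x ∉ A` pass `sk + 1` lines, and since the lines through `x` partition the
remaining points, the secants among them number `#A / k = sk - s + 1`; the other `s` lines
miss `A`. Counting the pairs (point outside `A`, line missing `A`) in two ways then gives the
number of lines missing `A`.
-/

open Finset

section Incidence

variable {α : Type*} [DecidableEq α] {X : Finset α} {L : Finset (Finset α)}

theorem sum_card_inter_lines_through
    (hpair : ∀ x ∈ X, ∀ y ∈ X, x ≠ y → #{l ∈ L | x ∈ l ∧ y ∈ l} = 1)
    {x : α} (hx : x ∈ X) {S : Finset α} (hS : S ⊆ X) (hxS : x ∉ S) :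
    ∑ l ∈ L with x ∈ l, #(l ∩ S) = #S := by
  have hunique : ∀ y ∈ S, #{l ∈ {l ∈ L | x ∈ l} | y ∈ l} = 1 := fun y hy => by
    rw [filter_filter]
    exact hpair x hx y (hS hy) (ne_of_mem_of_not_mem hy hxS).symm
  simpa only [inter_comm, mul_one] using sum_card_inter hunique

theorem card_lines_through {n : ℕ} (hn : 0 < n) (hX : #X = n ^ 2 + n + 1)
    (hlines : ∀ l ∈ L, l ⊆ X ∧ #l = n + 1)
    (hpair : ∀ x ∈ X, ∀ y ∈ X, x ≠ y → #{l ∈ L | x ∈ l ∧ y ∈ l} = 1)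
    {x : α} (hx : x ∈ X) : #{l ∈ L | x ∈ l} = n + 1 := by
  have hsum := sum_card_inter_lines_through hpair hx (erase_subset x X) (notMem_erase x X)
  have hline : ∀ l ∈ {l ∈ L | x ∈ l}, #(l ∩ X.erase x) = n := fun l hl => by
    obtain ⟨hlL, hxl⟩ := mem_filter.1 hl
    rw [inter_erase, inter_eq_left.2 (hlines l hlL).1, card_erase_of_mem hxl,
      (hlines l hlL).2, Nat.add_sub_cancel]
  rw [sum_congr rfl hline, sum_const, smul_eq_mul, card_erase_of_mem hx, hX,
    Nat.add_sub_cancel] at hsum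
  exact Nat.eq_of_mul_eq_mul_right hn (by rw [hsum]; ring)

theorem card_external_lines_through_mul_add {A : Finset α} {k : ℕ} (hAX : A ⊆ X)
    (hpair : ∀ x ∈ X, ∀ y ∈ X, x ≠ y → #{l ∈ L | x ∈ l ∧ y ∈ l} = 1)
    (harc : ∀ l ∈ L, #(l ∩ A) = 0 ∨ #(l ∩ A) = k) {x : α} (hx : x ∈ X) (hxA : x ∉ A) :
    #{l ∈ {l ∈ L | l ∩ A = ∅} | x ∈ l} * k + #A = #{l ∈ L | x ∈ l} * k := by
  set T := {l ∈ L | x ∈ l}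
  have hsecant : #{l ∈ T | ¬l ∩ A = ∅} * k = #A := calc
    _ = ∑ l ∈ T with ¬l ∩ A = ∅, #(l ∩ A) := by
      rw [sum_const_nat fun l hl => ?_]
      obtain ⟨hl, hlA⟩ := mem_filter.1 hl
      exact (harc l (mem_filter.1 hl).1).resolve_left (mt card_eq_zero.1 hlA)
    _ = ∑ l ∈ T, #(l ∩ A) := sum_filter_of_ne fun l _ h hlA => h (by rw [hlA, card_empty])
    _ = #A := sum_card_inter_lines_through hpair hx hAX hxA
  rw [filter_comm, ← hsecant, ← add_mul, card_filter_add_card_filter_not]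

theorem card_external_lines_mul {A : Finset α} {n m : ℕ}
    (hlines : ∀ l ∈ L, l ⊆ X ∧ #l = n + 1)
    (hdeg : ∀ x ∈ X \ A, #{l ∈ {l ∈ L | l ∩ A = ∅} | x ∈ l} = m) :
    #{l ∈ L | l ∩ A = ∅} * (n + 1) = #(X \ A) * m := by
  rw [← sum_card_inter hdeg, ← smul_eq_mul, ← sum_const]
  refine sum_congr rfl fun l hl => ?_
  obtain ⟨hlL, hlA⟩ := mem_filter.1 hl
  rw [← (hlines l hlL).2, inter_eq_right.2]
  exact subset_sdiff.2 ⟨(hlines l hlL).1, disjoint_iff_inter_eq_empty.2 hlA⟩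

end Incidence

/-- The lines of a projective plane of order `s k` disjoint from a maximal arc
`A` (meeting every line in 0 or `k` points) form a maximal {(sk−k+1)s, s}-arc
in the dual plane: there are `(sk−k+1)s` such lines, every point of the plane
not in `A` lies on exactly `s` of them, and every point of `A` lies on none. -/
theorem dual_arc {α : Type*} [DecidableEq α]
    (X : Finset α) (L : Finset (Finset α)) (s k : ℕ) (hk : 1 ≤ k)
    (hX : X.card = (s * k) ^ 2 + s * k + 1)
    (hlines : ∀ l ∈ L, l ⊆ X ∧ l.card = s * k + 1)
    (hpair : ∀ x ∈ X, ∀ y ∈ X, x ≠ y →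
      (L.filter (fun l => x ∈ l ∧ y ∈ l)).card = 1)
    (A : Finset α) (hAX : A ⊆ X)
    (hAcard : A.card = (s * k - s + 1) * k)
    (harc : ∀ l ∈ L, (l ∩ A).card = 0 ∨ (l ∩ A).card = k) :
    ((L.filter (fun l => l ∩ A = ∅)).card = (s * k - k + 1) * s) ∧
      (∀ x ∈ X, x ∉ A →
        ((L.filter (fun l => l ∩ A = ∅)).filter (fun l => x ∈ l)).card = s) ∧
      (∀ x ∈ A,
        ((L.filter (fun l => l ∩ A = ∅)).filter (fun l => x ∈ l)).card = 0) := by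
  have hdeg : ∀ x ∈ X, x ∉ A → #{l ∈ {l ∈ L | l ∩ A = ∅} | x ∈ l} = s := by
    intro x hx hxA
    have hs : 0 < s := by
      have := card_lt_card (ssubset_of_subset_of_ne hAX (ne_of_mem_of_not_mem' hx hxA).symm)
      rw [hX, hAcard] at this
      exact Nat.pos_of_ne_zero fun hs => by simp [hs] at this; omega
    have h := card_external_lines_through_mul_add hAX hpair harc hx hxA
    rw [card_lines_through (by positivity) hX hlines hpair hx, hAcard] at h
    have hsk : s ≤ s * k := Nat.le_mul_of_pos_right s hk
    refine Nat.eq_of_mul_eq_mul_right hk ?_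
    zify [hsk] at h ⊢
    linear_combination h
  refine ⟨?_, hdeg, fun x hx => card_eq_zero.2 (filter_eq_empty_iff.2 fun l hl hxl => ?_)⟩
  · have hcount := card_external_lines_mul hlines fun x hx =>
      hdeg x (mem_sdiff.1 hx).1 (mem_sdiff.1 hx).2
    have hpart := card_sdiff_add_card_eq_card hAX
    rw [hX, hAcard] at hpart
    refine Nat.eq_of_mul_eq_mul_right (Nat.succ_pos (s * k)) (hcount.trans ?_)
    rcases Nat.eq_zero_or_pos s with rfl | hs
    · simp
    have hsk : s ≤ s * k := Nat.le_mul_of_pos_right s hk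
    have hks : k ≤ s * k := Nat.le_mul_of_pos_left k hs
    zify [hsk, hks] at hpart ⊢
    linear_combination s * hpart
  · exact notMem_empty x ((mem_filter.1 hl).2 ▸ mem_inter.2 ⟨hxl, hx⟩)
end

section
/- Let A be a maximal {(sk−s+1)k, k}-arc in a projective plane of order sk with s ≥ 2, k ≥ 2, and let D be the associated 2-((sk−s+1)k, k, 1) design. Each point p of the plane not on A determines a resolution R_p of D (the parallel classes being the traces on A of the lines through p that meet A, grouped by the (sk−k+1)s exterior points after the correspondence), and for two exterior points p ≠ q lying on a common exterior line, the resolutions R_p and R_q are compatible. -/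
/-- A parallel class of the design with point set `X` and block set `B`. -/
def IsParallelClass {α : Type*} [DecidableEq α] (X : Finset α)
    (B P : Finset (Finset α)) : Prop :=
  P ⊆ B ∧ (∀ b₁ ∈ P, ∀ b₂ ∈ P, b₁ ≠ b₂ → Disjoint b₁ b₂) ∧ P.biUnion id = X

/-- A resolution: a partition of the block set into parallel classes. -/
def IsResolution {α : Type*} [DecidableEq α] (X : Finset α)
    (B : Finset (Finset α)) (R : Finset (Finset (Finset α))) : Prop :=
  (∀ P ∈ R, IsParallelClass X B P) ∧ R.biUnion id = B ∧
    ∀ P ∈ R, ∀ Q ∈ R, P ≠ Q → Disjoint P Q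

/-- Two resolutions are compatible: they share a parallel class, and any
other class of one meets any other class of the other in at most one block. -/
def Compatible {α : Type*} [DecidableEq α]
    (R₁ R₂ : Finset (Finset (Finset α))) : Prop :=
  ∃ P, P ∈ R₁ ∧ P ∈ R₂ ∧
    ∀ Q₁ ∈ R₁, ∀ Q₂ ∈ R₂, Q₁ ≠ P → Q₂ ≠ P → (Q₁ ∩ Q₂).card ≤ 1

section Aux

variable {α : Type*} [DecidableEq α]

/-- Two distinct points of the plane lie on at most one line. -/
lemma unique_line (X : Finset α) (L : Finset (Finset α))
    (hpair : ∀ x ∈ X, ∀ y ∈ X, x ≠ y →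
      (L.filter (fun l => x ∈ l ∧ y ∈ l)).card = 1)
    {x y : α} (hx : x ∈ X) (hy : y ∈ X) (hxy : x ≠ y)
    {l₁ l₂ : Finset α} (h₁ : l₁ ∈ L) (h₂ : l₂ ∈ L)
    (hx₁ : x ∈ l₁) (hy₁ : y ∈ l₁) (hx₂ : x ∈ l₂) (hy₂ : y ∈ l₂) :
    l₁ = l₂ := by
  obtain ⟨l, hl⟩ := Finset.card_eq_one.mp (hpair x hx y hy hxy)
  have e₁ : l₁ ∈ L.filter (fun l => x ∈ l ∧ y ∈ l) :=
    Finset.mem_filter.mpr ⟨h₁, hx₁, hy₁⟩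
  have e₂ : l₂ ∈ L.filter (fun l => x ∈ l ∧ y ∈ l) :=
    Finset.mem_filter.mpr ⟨h₂, hx₂, hy₂⟩
  rw [hl, Finset.mem_singleton] at e₁ e₂
  rw [e₁, e₂]

/-- Two distinct points of the plane lie on at least one line. -/
lemma exists_line (X : Finset α) (L : Finset (Finset α))
    (hpair : ∀ x ∈ X, ∀ y ∈ X, x ≠ y →
      (L.filter (fun l => x ∈ l ∧ y ∈ l)).card = 1)
    {x y : α} (hx : x ∈ X) (hy : y ∈ X) (hxy : x ≠ y) :
    ∃ l, l ∈ L ∧ x ∈ l ∧ y ∈ l := by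
  obtain ⟨l, hl⟩ := Finset.card_eq_one.mp (hpair x hx y hy hxy)
  have : l ∈ L.filter (fun l => x ∈ l ∧ y ∈ l) := by
    rw [hl]; exact Finset.mem_singleton_self l
  rw [Finset.mem_filter] at this
  exact ⟨l, this.1, this.2⟩

/-- In a projective plane of order `n ≥ 1`, any two distinct lines meet. -/
lemma lines_meet (X : Finset α) (L : Finset (Finset α)) (n : ℕ) (hn : 1 ≤ n)
    (hX : X.card = n ^ 2 + n + 1)
    (hlines : ∀ l ∈ L, l ⊆ X ∧ l.card = n + 1)
    (hpair : ∀ x ∈ X, ∀ y ∈ X, x ≠ y →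
      (L.filter (fun l => x ∈ l ∧ y ∈ l)).card = 1)
    {l₁ l₂ : Finset α} (h₁ : l₁ ∈ L) (h₂ : l₂ ∈ L) (hne : l₁ ≠ l₂) :
    (l₁ ∩ l₂).Nonempty := by
  classical
  by_contra hcon
  rw [Finset.not_nonempty_iff_eq_empty] at hcon
  have hl₁X := (hlines l₁ h₁).1
  have hl₂X := (hlines l₂ h₂).1
  obtain ⟨p, hp⟩ : l₁.Nonempty :=
    Finset.card_pos.mp (by rw [(hlines l₁ h₁).2]; omega)
  have hpX : p ∈ X := hl₁X hp
  have hpl₂ : p ∉ l₂ := by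
    intro h
    have : p ∈ l₁ ∩ l₂ := Finset.mem_inter.mpr ⟨hp, h⟩
    simp [hcon] at this
  set Lp := L.filter (fun m => p ∈ m) with hLp
  have hdisj : ∀ m₁ ∈ Lp, ∀ m₂ ∈ Lp, m₁ ≠ m₂ →
      Disjoint (m₁.erase p) (m₂.erase p) := by
    intro m₁ hm₁ m₂ hm₂ hne'
    rw [Finset.mem_filter] at hm₁ hm₂
    rw [Finset.disjoint_left]
    intro q hq₁ hq₂
    have hqp : q ≠ p := Finset.ne_of_mem_erase hq₁
    have hqX : q ∈ X := (hlines m₁ hm₁.1).1 (Finset.mem_of_mem_erase hq₁)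
    exact hne' (unique_line X L hpair hpX hqX (Ne.symm hqp) hm₁.1 hm₂.1
      hm₁.2 (Finset.mem_of_mem_erase hq₁) hm₂.2 (Finset.mem_of_mem_erase hq₂))
  have hcover : Lp.biUnion (fun m => m.erase p) = X.erase p := by
    apply Finset.Subset.antisymm
    · intro q hq
      rw [Finset.mem_biUnion] at hq
      obtain ⟨m, hm, hq⟩ := hq
      rw [Finset.mem_filter] at hm
      exact Finset.mem_erase.mpr ⟨Finset.ne_of_mem_erase hq,
        (hlines m hm.1).1 (Finset.mem_of_mem_erase hq)⟩
    · intro q hq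
      rw [Finset.mem_erase] at hq
      obtain ⟨m, hm, hpm, hqm⟩ := exists_line X L hpair hpX hq.2 (Ne.symm hq.1)
      exact Finset.mem_biUnion.mpr ⟨m, Finset.mem_filter.mpr ⟨hm, hpm⟩,
        Finset.mem_erase.mpr ⟨hq.1, hqm⟩⟩
  have hcount : Lp.card * n = n ^ 2 + n := by
    have hbu := Finset.card_biUnion hdisj
    rw [hcover, Finset.card_erase_of_mem hpX, hX] at hbu
    have hsum : ∀ m ∈ Lp, (m.erase p).card = n := by
      intro m hm
      rw [Finset.mem_filter] at hm
      rw [Finset.card_erase_of_mem hm.2, (hlines m hm.1).2]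
      omega
    rw [Finset.sum_congr rfl hsum, Finset.sum_const, smul_eq_mul] at hbu
    omega
  have hLpcard : Lp.card = n + 1 := by
    have h' : Lp.card * n = (n + 1) * n := by rw [hcount]; ring
    exact Nat.eq_of_mul_eq_mul_right hn h'
  have hl₁Lp : l₁ ∈ Lp := Finset.mem_filter.mpr ⟨h₁, hp⟩
  set f : α → Finset α := fun q =>
    if h : ∃ m, m ∈ L ∧ p ∈ m ∧ q ∈ m then h.choose else ∅ with hf
  have hfspec : ∀ q ∈ l₂, f q ∈ L ∧ p ∈ f q ∧ q ∈ f q := by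
    intro q hq
    have hqX : q ∈ X := hl₂X hq
    have hqp : p ≠ q := fun h => hpl₂ (h ▸ hq)
    have hex : ∃ m, m ∈ L ∧ p ∈ m ∧ q ∈ m := exists_line X L hpair hpX hqX hqp
    rw [hf]
    simp only [dif_pos hex]
    exact hex.choose_spec
  have hmaps : ∀ q ∈ l₂, f q ∈ Lp.erase l₁ := by
    intro q hq
    obtain ⟨hfL, hpf, hqf⟩ := hfspec q hq
    refine Finset.mem_erase.mpr ⟨?_, Finset.mem_filter.mpr ⟨hfL, hpf⟩⟩
    intro h
    have : q ∈ l₁ ∩ l₂ := Finset.mem_inter.mpr ⟨h ▸ hqf, hq⟩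
    simp [hcon] at this
  have hinj : Set.InjOn f l₂ := by
    intro q₁ hq₁ q₂ hq₂ heq
    by_contra hne'
    obtain ⟨hfL₁, hpf₁, hq₁f⟩ := hfspec q₁ hq₁
    obtain ⟨hfL₂, hpf₂, hq₂f⟩ := hfspec q₂ hq₂
    rw [heq] at hq₁f
    have : f q₂ = l₂ := unique_line X L hpair (hl₂X hq₁) (hl₂X hq₂) hne'
      hfL₂ h₂ hq₁f hq₂f hq₁ hq₂
    exact hpl₂ (this ▸ hpf₂)
  have hle := Finset.card_le_card_of_injOn f hmaps hinj
  rw [(hlines l₂ h₂).2, Finset.card_erase_of_mem hl₁Lp, hLpcard] at hle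
  omega

end Aux

/-- Let `A` be a maximal {(sk−s+1)k, k}-arc in a projective plane of order
`sk` (`s, k ≥ 2`) and let `D` be the associated 2-((sk−s+1)k, k, 1) design,
whose blocks are the nonempty traces of lines on `A`.  Each exterior point `p`
determines a parallel class of `D` (the traces on `A` of the lines through `p`
that meet `A`), each point of the dual design, i.e. each exterior line `ℓ`,
determines a resolution `R ℓ` of `D` (grouping the blocks into the parallel
classes of the exterior points on `ℓ`), and for two distinct exterior lines
(which meet in a common exterior point) the corresponding resolutions are
compatible. -/
theorem exterior_resolutions_compatible {α : Type*} [DecidableEq α]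
    (X : Finset α) (L : Finset (Finset α)) (s k : ℕ)
    (hs : 2 ≤ s) (hk : 2 ≤ k)
    (hX : X.card = (s * k) ^ 2 + s * k + 1)
    (hlines : ∀ l ∈ L, l ⊆ X ∧ l.card = s * k + 1)
    (hpair : ∀ x ∈ X, ∀ y ∈ X, x ≠ y →
      (L.filter (fun l => x ∈ l ∧ y ∈ l)).card = 1)
    (A : Finset α) (hAX : A ⊆ X)
    (hAcard : A.card = (s * k - s + 1) * k)
    (harc : ∀ l ∈ L, (l ∩ A).card = 0 ∨ (l ∩ A).card = k)
    (B : Finset (Finset α))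
    (hB : B = (L.filter (fun l => (l ∩ A).Nonempty)).image (fun l => l ∩ A))
    (C : α → Finset (Finset α))
    (hC : ∀ p, C p =
      (L.filter (fun l => p ∈ l ∧ (l ∩ A).Nonempty)).image (fun l => l ∩ A))
    (R : Finset α → Finset (Finset (Finset α)))
    (hR : ∀ ℓ, R ℓ = ℓ.image C) :
    (∀ p ∈ X, p ∉ A → IsParallelClass A B (C p)) ∧
      (∀ ℓ ∈ L, ℓ ∩ A = ∅ → IsResolution A B (R ℓ)) ∧
      (∀ ℓ ∈ L, ∀ m ∈ L, ℓ ∩ A = ∅ → m ∩ A = ∅ → ℓ ≠ m →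
        Compatible (R ℓ) (R m)) := by
  classical
  have hn : 1 ≤ s * k := le_trans (by norm_num) (Nat.mul_le_mul hs hk)
  -- a nonempty trace has exactly k points
  have htrace_card : ∀ l ∈ L, (l ∩ A).Nonempty → (l ∩ A).card = k := by
    intro l hl hne
    rcases harc l hl with h | h
    · exact absurd (Finset.card_eq_zero.mp h) (Finset.nonempty_iff_ne_empty.mp hne)
    · exact h
  -- a nonempty trace determines its line
  have htrace_eq : ∀ l₁ ∈ L, ∀ l₂ ∈ L,
      (l₁ ∩ A).Nonempty → l₁ ∩ A = l₂ ∩ A → l₁ = l₂ := by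
    intro l₁ h₁ l₂ h₂ hne heq
    have hc : 1 < (l₁ ∩ A).card := by rw [htrace_card l₁ h₁ hne]; omega
    obtain ⟨x, hx, y, hy, hxy⟩ := Finset.one_lt_card.mp hc
    have hx₂ : x ∈ l₂ ∩ A := heq ▸ hx
    have hy₂ : y ∈ l₂ ∩ A := heq ▸ hy
    exact unique_line X L hpair (hAX (Finset.mem_inter.mp hx).2)
      (hAX (Finset.mem_inter.mp hy).2) hxy h₁ h₂
      (Finset.mem_inter.mp hx).1 (Finset.mem_inter.mp hy).1
      (Finset.mem_inter.mp hx₂).1 (Finset.mem_inter.mp hy₂).1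
  -- Part 1: exterior points give parallel classes
  have h1 : ∀ p ∈ X, p ∉ A → IsParallelClass A B (C p) := by
    intro p hpX hpA
    refine ⟨?_, ?_, ?_⟩
    · rw [hC, hB]
      apply Finset.image_subset_image
      intro l hl
      rw [Finset.mem_filter] at hl ⊢
      exact ⟨hl.1, hl.2.2⟩
    · intro b₁ hb₁ b₂ hb₂ hne
      rw [hC] at hb₁ hb₂
      obtain ⟨l₁, hl₁, rfl⟩ := Finset.mem_image.mp hb₁
      obtain ⟨l₂, hl₂, rfl⟩ := Finset.mem_image.mp hb₂
      rw [Finset.mem_filter] at hl₁ hl₂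
      rw [Finset.disjoint_left]
      intro x hx₁ hx₂
      have hxA := (Finset.mem_inter.mp hx₁).2
      have hxp : x ≠ p := fun h => hpA (h ▸ hxA)
      have heq : l₁ = l₂ := unique_line X L hpair (hAX hxA) hpX hxp hl₁.1 hl₂.1
        (Finset.mem_inter.mp hx₁).1 hl₁.2.1 (Finset.mem_inter.mp hx₂).1 hl₂.2.1
      exact hne (by rw [heq])
    · apply Finset.Subset.antisymm
      · intro a ha
        rw [Finset.mem_biUnion] at ha
        obtain ⟨b, hb, hab⟩ := ha
        rw [hC] at hb
        obtain ⟨l, hl, rfl⟩ := Finset.mem_image.mp hb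
        exact (Finset.mem_inter.mp hab).2
      · intro a ha
        have hap : a ≠ p := fun h => hpA (h ▸ ha)
        obtain ⟨l, hlL, hal, hpl⟩ := exists_line X L hpair (hAX ha) hpX hap
        refine Finset.mem_biUnion.mpr ⟨l ∩ A, ?_, Finset.mem_inter.mpr ⟨hal, ha⟩⟩
        rw [hC]
        exact Finset.mem_image_of_mem _ (Finset.mem_filter.mpr
          ⟨hlL, hpl, ⟨a, Finset.mem_inter.mpr ⟨hal, ha⟩⟩⟩)
  -- Part 2: exterior lines give resolutions
  have h2 : ∀ ℓ ∈ L, ℓ ∩ A = ∅ → IsResolution A B (R ℓ) := by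
    intro ℓ hℓL hℓA
    have hℓX := (hlines ℓ hℓL).1
    have hext : ∀ q ∈ ℓ, q ∈ X ∧ q ∉ A := by
      intro q hq
      refine ⟨hℓX hq, fun hqA => ?_⟩
      have : q ∈ ℓ ∩ A := Finset.mem_inter.mpr ⟨hq, hqA⟩
      simp [hℓA] at this
    refine ⟨?_, ?_, ?_⟩
    · intro P hP
      rw [hR] at hP
      obtain ⟨q, hq, rfl⟩ := Finset.mem_image.mp hP
      exact h1 q (hext q hq).1 (hext q hq).2
    · apply Finset.Subset.antisymm
      · intro b hb
        rw [Finset.mem_biUnion] at hb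
        obtain ⟨P, hP, hbP⟩ := hb
        rw [hR] at hP
        obtain ⟨q, hq, rfl⟩ := Finset.mem_image.mp hP
        exact (h1 q (hext q hq).1 (hext q hq).2).1 hbP
      · intro b hb
        rw [hB] at hb
        obtain ⟨l, hl, rfl⟩ := Finset.mem_image.mp hb
        rw [Finset.mem_filter] at hl
        have hlℓ : l ≠ ℓ := fun h => by
          rw [h, hℓA] at hl
          exact Finset.not_nonempty_empty hl.2
        obtain ⟨q, hq⟩ := lines_meet X L (s * k) hn hX hlines hpair hl.1 hℓL hlℓ
        rw [Finset.mem_inter] at hq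
        refine Finset.mem_biUnion.mpr ⟨C q, ?_, ?_⟩
        · rw [hR]; exact Finset.mem_image_of_mem _ hq.2
        · rw [hC]
          exact Finset.mem_image_of_mem _ (Finset.mem_filter.mpr ⟨hl.1, hq.1, hl.2⟩)
    · intro P hP Q hQ hPQ
      rw [hR] at hP hQ
      obtain ⟨q₁, hq₁, rfl⟩ := Finset.mem_image.mp hP
      obtain ⟨q₂, hq₂, rfl⟩ := Finset.mem_image.mp hQ
      have hq12 : q₁ ≠ q₂ := fun h => hPQ (by rw [h])
      rw [Finset.disjoint_left]
      intro b hb₁ hb₂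
      rw [hC] at hb₁ hb₂
      obtain ⟨m₁, hm₁, heq₁⟩ := Finset.mem_image.mp hb₁
      obtain ⟨m₂, hm₂, heq₂⟩ := Finset.mem_image.mp hb₂
      rw [Finset.mem_filter] at hm₁ hm₂
      have hm12 : m₁ = m₂ :=
        htrace_eq m₁ hm₁.1 m₂ hm₂.1 hm₁.2.2 (heq₁.trans heq₂.symm)
      have hq₂m₁ : q₂ ∈ m₁ := by rw [hm12]; exact hm₂.2.1
      have hm1ℓ : m₁ = ℓ := unique_line X L hpair (hext q₁ hq₁).1 (hext q₂ hq₂).1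
        hq12 hm₁.1 hℓL hm₁.2.1 hq₂m₁ hq₁ hq₂
      have hAne := hm₁.2.2
      rw [hm1ℓ, hℓA] at hAne
      exact Finset.not_nonempty_empty hAne
  refine ⟨h1, h2, ?_⟩
  -- Part 3: compatibility
  intro ℓ hℓL m hmL hℓA hmA hℓm
  obtain ⟨p, hp⟩ := lines_meet X L (s * k) hn hX hlines hpair hℓL hmL hℓm
  rw [Finset.mem_inter] at hp
  have hpX : p ∈ X := (hlines ℓ hℓL).1 hp.1
  refine ⟨C p, by rw [hR]; exact Finset.mem_image_of_mem _ hp.1,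
    by rw [hR]; exact Finset.mem_image_of_mem _ hp.2, ?_⟩
  intro Q₁ hQ₁ Q₂ hQ₂ hne₁ hne₂
  rw [hR] at hQ₁ hQ₂
  obtain ⟨q₁, hq₁, rfl⟩ := Finset.mem_image.mp hQ₁
  obtain ⟨q₂, hq₂, rfl⟩ := Finset.mem_image.mp hQ₂
  have hq₁X : q₁ ∈ X := (hlines ℓ hℓL).1 hq₁
  have hq₂X : q₂ ∈ X := (hlines m hmL).1 hq₂
  have hq12 : q₁ ≠ q₂ := by
    rintro rfl
    by_cases h : q₁ = p
    · exact hne₁ (by rw [h])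
    · exact hℓm (unique_line X L hpair hq₁X hpX h hℓL hmL hq₁ hp.1 hq₂ hp.2)
  rw [Finset.card_le_one]
  have key : ∀ b, b ∈ C q₁ → b ∈ C q₂ →
      ∃ l, l ∈ L ∧ q₁ ∈ l ∧ q₂ ∈ l ∧ l ∩ A = b := by
    intro b hbc₁ hbc₂
    rw [hC] at hbc₁ hbc₂
    obtain ⟨m₁, hm₁, heq₁⟩ := Finset.mem_image.mp hbc₁
    obtain ⟨m₂, hm₂, heq₂⟩ := Finset.mem_image.mp hbc₂
    rw [Finset.mem_filter] at hm₁ hm₂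
    have hm12 : m₁ = m₂ :=
      htrace_eq m₁ hm₁.1 m₂ hm₂.1 hm₁.2.2 (heq₁.trans heq₂.symm)
    exact ⟨m₁, hm₁.1, hm₁.2.1, by rw [hm12]; exact hm₂.2.1, heq₁⟩
  intro b₁ hb₁ b₂ hb₂
  rw [Finset.mem_inter] at hb₁ hb₂
  obtain ⟨l₁, hl₁, hql₁, hql₁', hl₁b⟩ := key b₁ hb₁.1 hb₁.2
  obtain ⟨l₂, hl₂, hql₂, hql₂', hl₂b⟩ := key b₂ hb₂.1 hb₂.2
  have hll : l₁ = l₂ :=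
    unique_line X L hpair hq₁X hq₂X hq12 hl₁ hl₂ hql₁ hql₁' hql₂ hql₂'
  rw [← hl₁b, ← hl₂b, hll]
end
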